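/- Let G be a finite simple graph with edge weights w : E(G) → ℝ, let ∇ ⊆ V(G) and S ⊆ V(G), and let X = ∂(S) ∪ (∇ ∩ S), where ∂(S) is the set of vertices of S having a neighbor in V(G) ∖ S. Let H' be a finite weighted simple graph with V(H') ∩ V(G) = X such that for all u, v ∈ X and every real t: G[S] contains a u–v path all of whose edges have weight less than t if and only if H' contains such a path. Let G' be the weighted graph obtained from G by replacing G[S] by H', i.e., V(G') = (V(G) ∖ (S ∖ X)) ∪ V(H') and E(G') = {e ∈ E(G) : not both endpoints of e lie in S} ∪ E(H'), with weights inherited from G and H' respectively. Then for all u, v ∈ ∇ ∪ ∂(S) and every real t: G contains a u–v path all of whose edges have weight less than t if and only if G' contains such a path. -/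

import Mathlib

/-
Fix a threshold `t` and keep only the edges of weight `< t`; bottleneck connectivity becomes plain
reachability. The graph `G` is then the union of the crossing edges `E` (not both ends in `S`) and
of `G[S]`, while `G'` is the union of `E` and `H'`, and both pieces meet `E` only inside `X`.
Cut a walk in `E ∪ G[S]` into maximal `G[S]`-segments: each segment runs between vertices of `X`
(or an endpoint of the walk, which lies in `X` or avoids `G[S]`), so it can be replaced by an
`H'`-walk with the same ends. The situation is symmetric in `G[S]` and `H'`.
-/

open scoped Classical

/-- A finite simple graph on a subset of an ambient vertex type `U`. -/
structure FinGraph (U : Type) where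
  verts : Finset U
  G : SimpleGraph U
  support : ∀ ⦃u v : U⦄, G.Adj u v → u ∈ verts ∧ v ∈ verts

/-- The restriction (induced subgraph) of a `SimpleGraph` to a finite vertex set. -/
def SimpleGraph.restrictTo {U : Type} (G : SimpleGraph U) (s : Finset U) : SimpleGraph U where
  Adj u v := G.Adj u v ∧ u ∈ s ∧ v ∈ s
  symm := ⟨fun u v h => ⟨h.1.symm, h.2.2, h.2.1⟩⟩
  loopless := ⟨fun u h => G.irrefl h.1⟩

/-- The boundary `∂(S)` of `S` in `G`: vertices of `S` with a neighbor outside `S`. -/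
noncomputable def FinGraph.bdry {U : Type} [DecidableEq U] (G : FinGraph U) (S : Finset U) :
    Finset U :=
  S.filter fun v => ∃ u, G.G.Adj v u ∧ u ∉ S

/-- `G` contains a `u`–`v` path all of whose edges have weight (under `w`) less than `t`. -/
def BottleneckConn {U : Type} (G : SimpleGraph U) (w : Sym2 U → ℝ) (u v : U) (t : ℝ) : Prop :=
  ∃ p : G.Walk u v, p.IsPath ∧ ∀ e ∈ p.edges, w e < t

namespace SimpleGraph

variable {U : Type}

def weightBelow (G : SimpleGraph U) (w : Sym2 U → ℝ) (t : ℝ) : SimpleGraph U where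
  Adj a b := G.Adj a b ∧ w s(a, b) < t
  symm := ⟨fun _ _ ⟨hab, hw⟩ => ⟨hab.symm, by rwa [Sym2.eq_swap]⟩⟩
  loopless := ⟨fun _ h => G.irrefl h.1⟩

@[simp]
theorem weightBelow_adj {G : SimpleGraph U} {w : Sym2 U → ℝ} {t : ℝ} {a b : U} :
    (G.weightBelow w t).Adj a b ↔ G.Adj a b ∧ w s(a, b) < t :=
  Iff.rfl

theorem weightBelow_le (G : SimpleGraph U) (w : Sym2 U → ℝ) (t : ℝ) : G.weightBelow w t ≤ G :=
  fun _ _ h => h.1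

theorem mem_edgeSet_weightBelow {G : SimpleGraph U} {w : Sym2 U → ℝ} {t : ℝ} {e : Sym2 U} :
    e ∈ (G.weightBelow w t).edgeSet ↔ e ∈ G.edgeSet ∧ w e < t := by
  induction e using Sym2.ind
  rfl

theorem bottleneckConn_iff_reachable_weightBelow {G : SimpleGraph U} {w : Sym2 U → ℝ}
    {u v : U} {t : ℝ} : BottleneckConn G w u v t ↔ (G.weightBelow w t).Reachable u v := by
  constructor
  · rintro ⟨p, -, hp⟩
    exact ⟨p.transfer _ fun e he =>
      mem_edgeSet_weightBelow.mpr ⟨p.edges_subset_edgeSet he, hp e he⟩⟩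
  · rintro ⟨p⟩
    let q := p.transfer G fun e he =>
      edgeSet_mono (G.weightBelow_le w t) (p.edges_subset_edgeSet he)
    refine ⟨q.bypass, q.bypass_isPath, fun e he => ?_⟩
    have he' : e ∈ p.edges := by
      simpa only [q, Walk.edges_transfer] using q.edges_bypass_subset_edges he
    exact (mem_edgeSet_weightBelow.mp (p.edges_subset_edgeSet he')).2

theorem Reachable.eq_of_notMem_support {G : SimpleGraph U} {x a : U} (h : G.Reachable x a)
    (ha : a ∉ G.support) : x = a := by
  obtain ⟨p⟩ := h
  induction p with
  | nil => rfl
  | cons hadj _ ih =>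
    obtain rfl := ih ha
    exact absurd ⟨_, hadj.symm⟩ ha

theorem support_restrictTo_subset (G : SimpleGraph U) (s : Finset U) :
    (G.restrictTo s).support ⊆ s :=
  fun _ ⟨_, hab⟩ => hab.2.1

theorem weightBelow_eq_sdiff_sup_restrictTo (G : SimpleGraph U) (w : Sym2 U → ℝ) (t : ℝ)
    (s : Finset U) :
    G.weightBelow w t =
      (G \ G.restrictTo s).weightBelow w t ⊔ (G.restrictTo s).weightBelow w t := by
  ext a b
  simp only [weightBelow_adj, sup_adj, sdiff_adj, restrictTo]
  tauto

theorem weightBelow_eq_sdiff_restrictTo_sup {G H G' : SimpleGraph U} {w wH w' : Sym2 U → ℝ}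
    {s : Finset U} (hG'adj : ∀ a b : U, G'.Adj a b ↔ ((G.Adj a b ∧ ¬(a ∈ s ∧ b ∈ s)) ∨ H.Adj a b))
    (hw'G : ∀ ⦃a b : U⦄, G.Adj a b → ¬(a ∈ s ∧ b ∈ s) → w' s(a, b) = w s(a, b))
    (hw'H : ∀ e ∈ H.edgeSet, w' e = wH e) (t : ℝ) :
    G'.weightBelow w' t = (G \ G.restrictTo s).weightBelow w t ⊔ H.weightBelow wH t := by
  ext a b
  simp only [weightBelow_adj, sup_adj, sdiff_adj, restrictTo, hG'adj]
  constructor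
  · rintro ⟨⟨hG, hs⟩ | hH, hlt⟩
    · exact .inl ⟨⟨hG, fun h => hs h.2⟩, hw'G hG hs ▸ hlt⟩
    · exact .inr ⟨hH, hw'H s(a, b) hH ▸ hlt⟩
  · rintro (⟨⟨hG, hs⟩, hlt⟩ | ⟨hH, hlt⟩)
    · have hs' : ¬(a ∈ s ∧ b ∈ s) := fun h => hs ⟨hG, h⟩
      exact ⟨.inl ⟨hG, hs'⟩, (hw'G hG hs').symm ▸ hlt⟩
    · exact ⟨.inr hH, (hw'H s(a, b) hH).symm ▸ hlt⟩

theorem Reachable.sup_replace {E R H : SimpleGraph U} {X : Set U}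
    (hX : R.support ∩ E.support ⊆ X)
    (hRH : ∀ x ∈ X, ∀ y ∈ X, R.Reachable x y → H.Reachable x y)
    {u v : U} (hu : u ∈ X ∨ u ∉ R.support) (hv : v ∈ X ∨ v ∉ R.support)
    (huv : (E ⊔ R).Reachable u v) : (E ⊔ H).Reachable u v := by
  have hRH' : ∀ x ∈ X, ∀ y ∈ X, R.Reachable x y → (E ⊔ H).Reachable x y := fun x hx y hy h =>
    (hRH x hx y hy h).mono le_sup_right
  -- `a` is reached in `E ⊔ H` directly, or through an `R`-segment entered at a vertex of `X`.
  let Reached (a : U) : Prop :=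
    ∃ x, (E ⊔ H).Reachable u x ∧ (x = a ∧ a ∉ R.support ∨ x ∈ X ∧ R.Reachable x a)
  have reached_of_reachable {a : U} (ha : a ∈ X ∨ a ∉ R.support)
      (hua : (E ⊔ H).Reachable u a) : Reached a := by
    by_cases haX : a ∈ X
    · exact ⟨a, hua, .inr ⟨haX, .rfl⟩⟩
    · exact ⟨a, hua, .inl ⟨rfl, ha.resolve_left haX⟩⟩
  have reachable_of_reached {a : U} (ha : a ∈ X ∨ a ∉ R.support) :
      Reached a → (E ⊔ H).Reachable u a
    | ⟨_, hux, .inl ⟨rfl, _⟩⟩ => hux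
    | ⟨x, hux, .inr ⟨hx, hxa⟩⟩ => by
      rcases ha with ha | ha
      · exact hux.trans (hRH' x hx a ha hxa)
      · exact hxa.eq_of_notMem_support ha ▸ hux
  have port_of_adj_E {a b : U} (hab : E.Adj a b) : a ∈ X ∨ a ∉ R.support := by
    by_cases haR : a ∈ R.support
    · exact .inl (hX ⟨haR, _, hab⟩)
    · exact .inr haR
  have huv' := (reachable_iff_reflTransGen u v).mp huv
  refine reachable_of_reached hv ?_
  clear hv huv
  induction huv' with
  | refl => exact reached_of_reachable hu .rfl
  | @tail a b _ hab ih =>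
    rcases hab with hE | hR
    · have hua : (E ⊔ H).Reachable u a := reachable_of_reached (port_of_adj_E hE) ih
      exact reached_of_reachable (port_of_adj_E hE.symm) (hua.trans (Adj.reachable (.inl hE)))
    · obtain ⟨x, hux, (⟨rfl, hxR⟩ | ⟨hx, hxa⟩)⟩ := ih
      · exact absurd ⟨_, hR⟩ hxR
      · exact ⟨x, hux, .inr ⟨hx, hxa.trans hR.reachable⟩⟩

end SimpleGraph

namespace FinGraph

variable {U : Type}

theorem support_subset_verts (G : FinGraph U) : G.G.support ⊆ G.verts :=
  fun _ ⟨_, hab⟩ => (G.support hab).1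

variable [DecidableEq U]

theorem bdry_subset (G : FinGraph U) (S : Finset U) : G.bdry S ⊆ S :=
  Finset.filter_subset _ _

theorem support_restrictTo_inter_support_sdiff_subset_bdry (G : FinGraph U) (S : Finset U) :
    (G.G.restrictTo S).support ∩ (G.G \ G.G.restrictTo S).support ⊆ G.bdry S :=
  fun _ ⟨⟨_, hR⟩, b, hG, hnR⟩ =>
    Finset.mem_filter.mpr ⟨hR.2.1, b, hG, fun hb => hnR ⟨hG, hR.2.1, hb⟩⟩

theorem mem_interface_or_outside {G H : FinGraph U} {nab S : Finset U} (hnab : nab ⊆ G.verts)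
    (hHG : H.verts ∩ G.verts = G.bdry S ∪ (nab ∩ S)) {z : U} (hz : z ∈ nab ∪ G.bdry S) :
    z ∈ G.bdry S ∪ (nab ∩ S) ∨ z ∉ S ∧ z ∉ H.verts := by
  by_cases hzS : z ∈ S
  · rcases Finset.mem_union.mp hz with hz | hz
    · exact .inl (Finset.mem_union_right _ (Finset.mem_inter.mpr ⟨hz, hzS⟩))
    · exact .inl (Finset.mem_union_left _ hz)
  · have hzG : z ∈ G.verts :=
      hnab ((Finset.mem_union.mp hz).resolve_right fun h => hzS (G.bdry_subset S h))
    refine .inr ⟨hzS, fun hzH => hzS ?_⟩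
    have hzX := hHG ▸ Finset.mem_inter.mpr ⟨hzH, hzG⟩
    exact Finset.union_subset (G.bdry_subset S) Finset.inter_subset_right hzX

end FinGraph

open SimpleGraph in
theorem replace_subgraph_keeps_bottleneck_general {U : Type} [DecidableEq U]
    (G : FinGraph U) (w : Sym2 U → ℝ)
    (nab S : Finset U) (hnab : nab ⊆ G.verts)
    (H' : FinGraph U) (wH : Sym2 U → ℝ)
    (hHG : H'.verts ∩ G.verts = G.bdry S ∪ (nab ∩ S))
    (hHeq : ∀ u ∈ G.bdry S ∪ (nab ∩ S), ∀ v ∈ G.bdry S ∪ (nab ∩ S), ∀ t : ℝ,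
      BottleneckConn (G.G.restrictTo S) w u v t ↔ BottleneckConn H'.G wH u v t)
    (G' : FinGraph U) (w' : Sym2 U → ℝ)
    (hG'adj : ∀ a b : U, G'.G.Adj a b ↔
      ((G.G.Adj a b ∧ ¬(a ∈ S ∧ b ∈ S)) ∨ H'.G.Adj a b))
    -- weights are inherited from `G` and from `H'` respectively
    (hw'G : ∀ ⦃a b : U⦄, G.G.Adj a b → ¬(a ∈ S ∧ b ∈ S) → w' s(a, b) = w s(a, b))
    (hw'H : ∀ e ∈ H'.G.edgeSet, w' e = wH e)
    (u v : U) (hu : u ∈ nab ∪ G.bdry S) (hv : v ∈ nab ∪ G.bdry S) (t : ℝ) :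
    BottleneckConn G.G w u v t ↔ BottleneckConn G'.G w' u v t := by
  set X := G.bdry S ∪ (nab ∩ S)
  set E := (G.G \ G.G.restrictTo S).weightBelow w t
  set R := (G.G.restrictTo S).weightBelow w t
  set H := H'.G.weightBelow wH t
  have hRE : R.support ∩ E.support ⊆ ↑X :=
    (Set.inter_subset_inter (support_mono (weightBelow_le ..)) (support_mono (weightBelow_le ..))
      |>.trans (G.support_restrictTo_inter_support_sdiff_subset_bdry S)).trans
      (Finset.coe_subset.mpr Finset.subset_union_left)
  have hHE : H.support ∩ E.support ⊆ ↑X := fun a ⟨haH, haE⟩ => hHG ▸ Finset.mem_inter.mpr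
    ⟨H'.support_subset_verts (support_mono (weightBelow_le ..) haH),
      G.support_subset_verts (support_mono ((weightBelow_le ..).trans sdiff_le) haE)⟩
  have hport {z : U} (hz : z ∈ nab ∪ G.bdry S) : z ∈ X ∨ z ∉ R.support ∧ z ∉ H.support :=
    (FinGraph.mem_interface_or_outside hnab hHG hz).imp_right fun ⟨hzS, hzH⟩ =>
      ⟨fun h => hzS (support_restrictTo_subset _ _ (support_mono (weightBelow_le ..) h)),
        fun h => hzH (H'.support_subset_verts (support_mono (weightBelow_le ..) h))⟩
  have hRH (x : U) (hx : x ∈ X) (y : U) (hy : y ∈ X) : R.Reachable x y ↔ H.Reachable x y := by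
    simpa only [bottleneckConn_iff_reachable_weightBelow] using hHeq x hx y hy t
  rw [bottleneckConn_iff_reachable_weightBelow, bottleneckConn_iff_reachable_weightBelow,
    weightBelow_eq_sdiff_sup_restrictTo _ _ _ S,
    weightBelow_eq_sdiff_restrictTo_sup hG'adj hw'G hw'H]
  exact ⟨Reachable.sup_replace hRE (fun x hx y hy => (hRH x hx y hy).1)
      ((hport hu).imp_right And.left) ((hport hv).imp_right And.left),
    Reachable.sup_replace hHE (fun x hx y hy => (hRH x hx y hy).2)
      ((hport hu).imp_right And.right) ((hport hv).imp_right And.right)⟩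

/-- for `X = ∂(S) ∪ (∇ ∩ S)`, replacing `G[S]` by a weighted graph `H'`
(with `V(H') ∩ V(G) = X`) having the same bottleneck connectivity on `X` as `G[S]`
preserves bottleneck connectivity between all vertices of `∇ ∪ ∂(S)`. -/
theorem replace_subgraph_keeps_bottleneck {U : Type} [DecidableEq U]
    (G : FinGraph U) (w : Sym2 U → ℝ)
    (nab S : Finset U) (hnab : nab ⊆ G.verts) (hS : S ⊆ G.verts)
    (H' : FinGraph U) (wH : Sym2 U → ℝ)
    (hHG : H'.verts ∩ G.verts = G.bdry S ∪ (nab ∩ S))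
    (hHeq : ∀ u ∈ G.bdry S ∪ (nab ∩ S), ∀ v ∈ G.bdry S ∪ (nab ∩ S), ∀ t : ℝ,
      BottleneckConn (G.G.restrictTo S) w u v t ↔ BottleneckConn H'.G wH u v t)
    (G' : FinGraph U) (w' : Sym2 U → ℝ)
    (hG'verts : G'.verts = (G.verts \ (S \ (G.bdry S ∪ (nab ∩ S)))) ∪ H'.verts)
    (hG'adj : ∀ a b : U, G'.G.Adj a b ↔
      ((G.G.Adj a b ∧ ¬(a ∈ S ∧ b ∈ S)) ∨ H'.G.Adj a b))
    -- weights are inherited from `G` and from `H'` respectively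
    (hw'G : ∀ ⦃a b : U⦄, G.G.Adj a b → ¬(a ∈ S ∧ b ∈ S) → w' s(a, b) = w s(a, b))
    (hw'H : ∀ e ∈ H'.G.edgeSet, w' e = wH e)
    (u v : U) (hu : u ∈ nab ∪ G.bdry S) (hv : v ∈ nab ∪ G.bdry S) (t : ℝ) :
    BottleneckConn G.G w u v t ↔ BottleneckConn G'.G w' u v t :=
  replace_subgraph_keeps_bottleneck_general G w nab S hnab H' wH hHG hHeq G' w' hG'adj hw'G hw'H u v
    hu hv t
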